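/- arXiv:1803.07590 — 3 statements merged into one kernel-verified Lean document; each statement's English description precedes it below -/
import Mathlib

section
/- Let (X_t)_{t≥1} be an i.i.d. sequence of random vectors in ℝ^d, let Ω be a symmetric positive-definite d × d real matrix, and let ψ : ℝ → ℂ be a function such that the characteristic function of X₁ satisfies E[exp(i sᵀX₁)] = ψ(sᵀΩs) for all s ∈ ℝ^d. Then the characteristic function of the loss L satisfies, for all t ∈ ℝ, E[e^{itL}] = ∏_{k=1}^n ψ(t² · β_kᵀΩβ_k)^{h_k − h_{k−1}}. -/
open MeasureTheory ProbabilityTheory Complex Finset Matrix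

/-!
Writing `t L = ∑ₖ ∑_{j ∈ (hₖ₋₁, hₖ]} (t βₖ) ⬝ X_j`, the summands are functions of distinct `X_j`
because the horizons are increasing, so by independence the characteristic function of `L`
factors over the days `j`. By identical distribution the factor of a day in horizon `k` is
`E[exp(i (t βₖ) ⬝ X₁)] = ψ(t² βₖᵀ Ω βₖ)`, and horizon `k` has `hₖ - hₖ₋₁` days.
-/

section CharacteristicFunction

variable {Ω : Type*} [MeasurableSpace Ω] {μ : Measure Ω}

lemma integral_cexp_I_mul_eq_charFun_map {Y : Ω → ℝ} (hY : AEMeasurable Y μ) :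
    ∫ ω, cexp (I * Y ω) ∂μ = charFun (μ.map Y) 1 := by
  rw [charFun_apply_real, integral_map hY (by fun_prop)]
  simp [mul_comm]

lemma integral_cexp_I_mul_finsetSum_of_iIndepFun {ι : Type*} {s : Finset ι} {Z : ι → Ω → ℝ}
    (hZ : ∀ i ∈ s, Measurable (Z i)) (hindep : iIndepFun (s.restrict Z) μ) :
    ∫ ω, cexp (I * ↑(∑ i ∈ s, Z i ω)) ∂μ = ∏ i ∈ s, ∫ ω, cexp (I * Z i ω) ∂μ := by
  rw [integral_cexp_I_mul_eq_charFun_map (by fun_prop),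
    hindep.charFun_map_fun_finsetSum_eq_prod fun i hi => (hZ i hi).aemeasurable,
    Finset.prod_apply]
  exact Finset.prod_congr rfl fun i hi =>
    (integral_cexp_I_mul_eq_charFun_map (hZ i hi).aemeasurable).symm

end CharacteristicFunction

lemma Set.PairwiseDisjoint.injOn_sigma_snd {ι α : Type*} {K : Finset ι} {B : ι → Finset α}
    (hB : (K : Set ι).PairwiseDisjoint B) :
    Set.InjOn (Sigma.snd : (Σ _ : ι, α) → α) (K.sigma B) := by
  rintro ⟨k, j⟩ hp ⟨k', j'⟩ hq (rfl : j = j')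
  simp only [Finset.coe_sigma, Set.mem_sigma_iff, Finset.mem_coe] at hp hq
  obtain rfl : k = k' := hB.elim_finset hp.1 hq.1 j hp.2 hq.2
  rfl

lemma MonotoneOn.pairwiseDisjoint_Icc_blocks {h : ℕ → ℕ} {n : ℕ} (hh : MonotoneOn h (Set.Iic n)) :
    (↑(Icc 1 n) : Set ℕ).PairwiseDisjoint fun k => Icc (h (k - 1) + 1) (h k) := by
  have disjoint_of_lt : ∀ k k', k < k' → k' ≤ n →
      Disjoint (Icc (h (k - 1) + 1) (h k)) (Icc (h (k' - 1) + 1) (h k')) := by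
    intro k k' hkk' hk'
    have : h k ≤ h (k' - 1) :=
      hh (Set.mem_Iic.2 (by omega)) (Set.mem_Iic.2 (by omega)) (by omega)
    refine Finset.disjoint_left.2 fun x hx hx' => ?_
    simp only [Finset.mem_Icc] at hx hx'
    omega
  intro k hk k' hk' hne
  simp only [Finset.coe_Icc, Set.mem_Icc] at hk hk'
  rcases hne.lt_or_gt with hlt | hlt
  · exact disjoint_of_lt k k' hlt hk'.2
  · exact (disjoint_of_lt k' k hlt hk.2).symm

lemma smul_dotProduct_mulVec_smul {m R : Type*} [Fintype m] [CommRing R] (A : Matrix m m R)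
    (t : R) (v : m → R) : (t • v) ⬝ᵥ (A *ᵥ (t • v)) = t ^ 2 * (v ⬝ᵥ (A *ᵥ v)) := by
  simp only [smul_dotProduct, mulVec_smul, dotProduct_smul, smul_eq_mul]
  ring

theorem charFun_loss_elliptical_general
    {ΩS : Type*} [MeasurableSpace ΩS] (μ : Measure ΩS) [IsProbabilityMeasure μ]
    (d n : ℕ)
    (h : ℕ → ℕ) (hmono : ∀ k < n, h k < h (k + 1))
    (β : ℕ → Fin d → ℝ)
    (X : ℕ → ΩS → Fin d → ℝ) (hXmeas : ∀ t, Measurable (X t))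
    (hXindep : iIndepFun X μ)
    (hXident : ∀ t, Measure.map (X t) μ = Measure.map (X 1) μ)
    (Ωm : Matrix (Fin d) (Fin d) ℝ)
    (ψ : ℝ → ℂ)
    (hψ : ∀ s : Fin d → ℝ,
      (∫ ω, Complex.exp (Complex.I * (s ⬝ᵥ X 1 ω)) ∂μ) = ψ (s ⬝ᵥ (Ωm *ᵥ s)))
    (L : ΩS → ℝ)
    (hL : ∀ ω, L ω =
      ∑ k ∈ Finset.Icc 1 n, β k ⬝ᵥ (∑ j ∈ Finset.Icc (h (k - 1) + 1) (h k), X j ω)) :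
    ∀ t : ℝ,
      (∫ ω, Complex.exp (Complex.I * (t * L ω)) ∂μ) =
        ∏ k ∈ Finset.Icc 1 n, (ψ (t ^ 2 * (β k ⬝ᵥ (Ωm *ᵥ β k)))) ^ (h k - h (k - 1)) := by
  intro t
  set S := (Icc 1 n).sigma fun k => Icc (h (k - 1) + 1) (h k)
  have hdisj := (strictMonoOn_Iic_of_lt_succ hmono).monotoneOn.pairwiseDisjoint_Icc_blocks
  have hdot : ∀ c : Fin d → ℝ, Measurable (c ⬝ᵥ ·) := fun c =>
    (continuous_const.dotProduct continuous_id).measurable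
  let Z : (Σ _ : ℕ, ℕ) → ΩS → ℝ := fun p ω => (t • β p.1) ⬝ᵥ X p.2 ω
  have hindep : iIndepFun (S.restrict Z) μ :=
    (hXindep.precomp (Set.injOn_iff_injective.1 hdisj.injOn_sigma_snd)).comp _ fun _ => hdot _
  have hsum : ∀ ω, t * L ω = ∑ p ∈ S, Z p ω := fun ω => by
    simp only [hL, S, Z, sum_sigma, mul_sum, dotProduct_sum, smul_dotProduct, smul_eq_mul]
  have hfactor : ∀ p, ∫ ω, cexp (I * Z p ω) ∂μ = ψ (t ^ 2 * (β p.1 ⬝ᵥ (Ωm *ᵥ β p.1))) := by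
    intro p
    have hident : IdentDistrib (X p.2) (X 1) μ μ :=
      ⟨(hXmeas _).aemeasurable, (hXmeas 1).aemeasurable, hXident _⟩
    rw [← smul_dotProduct_mulVec_smul, ← hψ]
    exact (hident.comp ((measurable_ofReal.comp (hdot _)).const_mul I).cexp).integral_eq
  simp_rw [← ofReal_mul, hsum]
  rw [integral_cexp_I_mul_finsetSum_of_iIndepFun (Z := Z) (fun p _ => (hdot _).comp (hXmeas p.2))
    hindep, prod_sigma]
  simp only [hfactor, prod_const, Nat.card_Icc, Nat.add_sub_add_right]

/-- **Characteristic function of the loss under an elliptical i.i.d. model.**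
Let `(X_t)_{t ≥ 1}` be i.i.d. random vectors in `ℝ^d` whose common characteristic
function is `E[exp(i sᵀ X₁)] = ψ(sᵀ Ω s)` for a symmetric positive-definite matrix `Ω`.
With liquidity horizons `0 = h₀ < ⋯ < h_n`, weights `β_k = ∑_{j=k}^n b_j` and loss
`L = ∑_{k=1}^n β_k ⬝ (∑_{j=h_{k-1}+1}^{h_k} X_j)`, the characteristic function of `L` is
`E[exp(i t L)] = ∏_{k=1}^n ψ(t² βₖᵀ Ω βₖ)^{h_k - h_{k-1}}`. -/
theorem charFun_loss_elliptical
    {ΩS : Type*} [MeasurableSpace ΩS] (μ : Measure ΩS) [IsProbabilityMeasure μ]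
    (d n : ℕ) (hd : 1 ≤ d) (hn : 1 ≤ n)
    (h : ℕ → ℕ) (h0 : h 0 = 0) (hmono : ∀ k < n, h k < h (k + 1))
    (b : ℕ → Fin d → ℝ) (β : ℕ → Fin d → ℝ)
    (hβ : ∀ k, β k = ∑ j ∈ Finset.Icc k n, b j)
    (X : ℕ → ΩS → Fin d → ℝ) (hXmeas : ∀ t, Measurable (X t))
    (hXindep : iIndepFun X μ)
    (hXident : ∀ t, Measure.map (X t) μ = Measure.map (X 1) μ)
    (Ωm : Matrix (Fin d) (Fin d) ℝ) (hΩ : Ωm.PosDef)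
    (ψ : ℝ → ℂ)
    (hψ : ∀ s : Fin d → ℝ,
      (∫ ω, Complex.exp (Complex.I * (s ⬝ᵥ X 1 ω)) ∂μ) = ψ (s ⬝ᵥ (Ωm *ᵥ s)))
    (L : ΩS → ℝ)
    (hL : ∀ ω, L ω =
      ∑ k ∈ Finset.Icc 1 n, β k ⬝ᵥ (∑ j ∈ Finset.Icc (h (k - 1) + 1) (h k), X j ω)) :
    ∀ t : ℝ,
      (∫ ω, Complex.exp (Complex.I * (t * L ω)) ∂μ) =
        ∏ k ∈ Finset.Icc 1 n, (ψ (t ^ 2 * (β k ⬝ᵥ (Ωm *ᵥ β k)))) ^ (h k - h (k - 1)) :=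
  charFun_loss_elliptical_general μ d n h hmono β X hXmeas hXindep hXident Ωm ψ hψ L hL
end

section
/- Let (X_t)_{t≥1} be an i.i.d. sequence of square-integrable mean-zero random vectors in ℝ^d with covariance matrix Σ. Then the standard deviations of the loss L and of the variables L^{(k)} satisfy sd(L) = sqrt( Σ_{k=1}^n ( sqrt((h_k − h_{k−1})/h₁) · sd(L^{(k)}) )² ). -/
/-! Independence makes the variance of a sum of terms `c ⬝ᵥ X j` with distinct time indices `j`
additive, and identical distribution makes each term contribute `Var[c ⬝ᵥ X 1]`. Hence
`Var[L] = ∑ₖ (h k - h (k - 1)) Var[β k ⬝ᵥ X 1]` and `Var[L⁽ᵏ⁾] = h 1 · Var[β k ⬝ᵥ X 1]`; eliminating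
`Var[β k ⬝ᵥ X 1]` (possible since `h 1 > h 0 ≥ 0`) gives the identity. -/

open MeasureTheory ProbabilityTheory Finset Matrix

section

variable {Ω ι κ m : Type*} [MeasurableSpace Ω] {μ : Measure Ω} [Fintype m]

lemma measurable_const_dotProduct (c : m → ℝ) : Measurable fun x : m → ℝ => c ⬝ᵥ x :=
  (continuous_const.dotProduct continuous_id).measurable

lemma MeasureTheory.MemLp.const_dotProduct {p : ENNReal} {f : Ω → m → ℝ} (hf : MemLp f p μ)
    (c : m → ℝ) : MemLp (fun ω => c ⬝ᵥ f ω) p μ :=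
  memLp_finsetSum _ fun i _ => (hf.eval i).const_mul (c i)

lemma ProbabilityTheory.IdentDistrib.variance_const_dotProduct {Ω' : Type*} [MeasurableSpace Ω']
    {ν : Measure Ω'} {f : Ω → m → ℝ} {g : Ω' → m → ℝ} (hfg : IdentDistrib f g μ ν) (c : m → ℝ) :
    variance (fun ω => c ⬝ᵥ f ω) μ = variance (fun ω => c ⬝ᵥ g ω) ν :=
  (hfg.comp (measurable_const_dotProduct c)).variance_eq

lemma ProbabilityTheory.iIndepFun.variance_sum_const_dotProduct {X : κ → Ω → m → ℝ}
    (hX : iIndepFun X μ) (hXsq : ∀ t, MemLp (X t) 2 μ) {s : Finset ι} {e : ι → κ}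
    (he : Set.InjOn e s) (a : ι → m → ℝ) :
    variance (fun ω => ∑ p ∈ s, a p ⬝ᵥ X (e p) ω) μ
      = ∑ p ∈ s, variance (fun ω => a p ⬝ᵥ X (e p) ω) μ := by
  rw [← IndepFun.variance_sum (fun p _ => (hXsq (e p)).const_dotProduct (a p))]
  · congr 1; ext ω; simp
  intro p hp q hq hpq
  exact (hX.indepFun (he.ne hp hq hpq)).comp (measurable_const_dotProduct _)
    (measurable_const_dotProduct _)

lemma Finset.injOn_snd_sigma {α : Type*} {s : Finset ι} {t : ι → Finset α}
    (ht : (s : Set ι).PairwiseDisjoint t) :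
    Set.InjOn (fun p : (_ : ι) × α => p.2) (s.sigma t) := by
  rintro ⟨i, x⟩ hi ⟨j, y⟩ hj (rfl : x = y)
  simp only [coe_sigma, Set.mem_sigma_iff, mem_coe] at hi hj
  obtain rfl : i = j := ht.elim hi.1 hj.1 (not_disjoint_iff.2 ⟨x, hi.2, hj.2⟩)
  rfl

lemma MonotoneOn.pairwiseDisjoint_Icc_sub_one {h : ℕ → ℕ} {n : ℕ}
    (hh : MonotoneOn h (Set.Iic n)) :
    ((Icc 1 n : Finset ℕ) : Set ℕ).PairwiseDisjoint fun k => Icc (h (k - 1) + 1) (h k) := by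
  have key : ∀ k ∈ Icc 1 n, ∀ l ∈ Icc 1 n, k < l →
      Disjoint (Icc (h (k - 1) + 1) (h k)) (Icc (h (l - 1) + 1) (h l)) := by
    intro k hk l hl hkl
    simp only [mem_Icc] at hk hl
    have : h k ≤ h (l - 1) := hh (by simp; omega) (by simp; omega) (by omega)
    exact disjoint_left.2 fun j hj hj' => by simp only [mem_Icc] at hj hj'; omega
  intro k hk l hl hkl
  rcases hkl.lt_or_gt with hlt | hlt
  · exact key k hk l hl hlt
  · exact (key l hl k hk hlt).symm
end

theorem sd_loss_aggregation_general
    {ΩS : Type*} [MeasurableSpace ΩS] (μ : Measure ΩS)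
    (d n : ℕ)
    (h : ℕ → ℕ) (hmono : ∀ k < n, h k < h (k + 1))
    (β : ℕ → Fin d → ℝ)
    (X : ℕ → ΩS → Fin d → ℝ)
    (hXindep : iIndepFun X μ)
    (hXident : ∀ t, Measure.map (X t) μ = Measure.map (X 1) μ)
    (hXsq : ∀ t, MemLp (X t) 2 μ)
    (L : ΩS → ℝ)
    (hL : ∀ ω, L ω =
      ∑ k ∈ Finset.Icc 1 n, β k ⬝ᵥ (∑ j ∈ Finset.Icc (h (k - 1) + 1) (h k), X j ω))
    (Lk : ℕ → ΩS → ℝ)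
    (hLk : ∀ k ω, Lk k ω = β k ⬝ᵥ (∑ j ∈ Finset.Icc 1 (h 1), X j ω)) :
    Real.sqrt (variance L μ) = Real.sqrt (∑ k ∈ Finset.Icc 1 n,
      (Real.sqrt (((h k : ℝ) - (h (k - 1) : ℝ)) / (h 1 : ℝ)) *
        Real.sqrt (variance (Lk k) μ)) ^ 2) := by
  have hmonoOn : MonotoneOn h (Set.Iic n) := (strictMonoOn_Iic_of_lt_succ hmono).monotoneOn
  have hgap : ∀ k ∈ Icc 1 n, h (k - 1) ≤ h k := fun k hk =>
    hmonoOn (by simp at hk ⊢; omega) (by simp at hk ⊢; omega) (by omega)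
  set v : (Fin d → ℝ) → ℝ := fun c => variance (fun ω => c ⬝ᵥ X 1 ω) μ
  have hident (t : ℕ) (c : Fin d → ℝ) : variance (fun ω => c ⬝ᵥ X t ω) μ = v c :=
    IdentDistrib.variance_const_dotProduct
      ⟨(hXsq t).aestronglyMeasurable.aemeasurable, (hXsq 1).aestronglyMeasurable.aemeasurable,
        hXident t⟩ c
  have hvarLk (k : ℕ) : variance (Lk k) μ = h 1 * v (β k) := by
    rw [funext (hLk k)]
    simp_rw [dotProduct_sum]
    refine (hXindep.variance_sum_const_dotProduct hXsq (Set.injOn_id _) fun _ => β k).trans ?_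
    simp [hident]
  have hvarL : variance L μ = ∑ k ∈ Icc 1 n, ((h k : ℝ) - h (k - 1)) * v (β k) := by
    have hL' : L = fun ω => ∑ p ∈ (Icc 1 n).sigma fun k => Icc (h (k - 1) + 1) (h k),
        β p.1 ⬝ᵥ X p.2 ω := by
      ext ω
      simp_rw [hL, sum_sigma, dotProduct_sum]
    rw [hL', hXindep.variance_sum_const_dotProduct hXsq
      (injOn_snd_sigma hmonoOn.pairwiseDisjoint_Icc_sub_one), sum_sigma]
    refine sum_congr rfl fun k hk => ?_
    simp [hident, Nat.cast_sub (hgap k hk)]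
  rw [hvarL]
  congr 1
  refine sum_congr rfl fun k hk => ?_
  have h1pos : (0 : ℝ) < h 1 := by
    exact_mod_cast (Nat.zero_le _).trans_lt (hmono 0 (by simp at hk; omega))
  have hgap' : (0 : ℝ) ≤ h k - h (k - 1) := sub_nonneg.2 (by exact_mod_cast hgap k hk)
  rw [mul_pow, Real.sq_sqrt (div_nonneg hgap' h1pos.le), Real.sq_sqrt (variance_nonneg _ _),
    hvarLk]
  field_simp

/-- **Square-root-of-time aggregation of standard deviations.**
If `(X_t)_{t≥1}` are i.i.d. square-integrable mean-zero random vectors in `ℝ^d`, then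
the loss `L = ∑_{k=1}^n β_k ⬝ (∑_{j=h_{k-1}+1}^{h_k} X_j)` and the variables
`L⁽ᵏ⁾ = β_k ⬝ (∑_{j=1}^{h₁} X_j)` satisfy
`sd(L) = √( ∑_{k=1}^n ( √((h_k - h_{k-1})/h₁) · sd(L⁽ᵏ⁾) )² )`. -/
theorem sd_loss_aggregation
    {ΩS : Type*} [MeasurableSpace ΩS] (μ : Measure ΩS) [IsProbabilityMeasure μ]
    (d n : ℕ) (hd : 1 ≤ d) (hn : 1 ≤ n)
    (h : ℕ → ℕ) (h0 : h 0 = 0) (hmono : ∀ k < n, h k < h (k + 1))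
    (b : ℕ → Fin d → ℝ) (β : ℕ → Fin d → ℝ)
    (hβ : ∀ k, β k = ∑ j ∈ Finset.Icc k n, b j)
    (X : ℕ → ΩS → Fin d → ℝ) (hXmeas : ∀ t, Measurable (X t))
    (hXindep : iIndepFun X μ)
    (hXident : ∀ t, Measure.map (X t) μ = Measure.map (X 1) μ)
    (hXsq : ∀ t, MemLp (X t) 2 μ)
    (hXmean : ∀ i, ∫ ω, X 1 ω i ∂μ = 0)
    (L : ΩS → ℝ)
    (hL : ∀ ω, L ω =
      ∑ k ∈ Finset.Icc 1 n, β k ⬝ᵥ (∑ j ∈ Finset.Icc (h (k - 1) + 1) (h k), X j ω))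
    (Lk : ℕ → ΩS → ℝ)
    (hLk : ∀ k ω, Lk k ω = β k ⬝ᵥ (∑ j ∈ Finset.Icc 1 (h 1), X j ω)) :
    Real.sqrt (variance L μ) = Real.sqrt (∑ k ∈ Finset.Icc 1 n,
      (Real.sqrt (((h k : ℝ) - (h (k - 1) : ℝ)) / (h 1 : ℝ)) *
        Real.sqrt (variance (Lk k) μ)) ^ 2) :=
  sd_loss_aggregation_general μ d n h hmono β X hXindep hXident hXsq L hL Lk hLk
end

section
/- Let λ > 0, let W have the Gamma distribution with shape λ and rate 1, and let V be a standard normal random variable independent of W. Then Y = √W · V has characteristic function E[e^{isY}] = (1 + s²/2)^{−λ} for all s ∈ ℝ. -/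
/-!
Conditionally on `W = w`, the variable `√w · V` is centered normal with variance `w`, so its
characteristic function at `s` is `exp (-(s² / 2) w)`. Averaging over `W` (independence lets us
integrate over the product of the two laws) turns the characteristic function of `Y` into the
Laplace transform of `Gamma(λ, 1)` at `s² / 2`, which is `(1 + s² / 2)^(-λ)`.
-/

open MeasureTheory ProbabilityTheory Complex Set

lemma ProbabilityTheory.IndepFun.integral_comp_prodMk {Ω α β E : Type*} [MeasurableSpace Ω]
    [MeasurableSpace α] [MeasurableSpace β] [NormedAddCommGroup E] [NormedSpace ℝ E]
    {μ : Measure Ω} [IsFiniteMeasure μ] {X : Ω → α} {Y : Ω → β} (hXY : IndepFun X Y μ)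
    (hX : AEMeasurable X μ) (hY : AEMeasurable Y μ) {g : α × β → E}
    (hg : Integrable g ((μ.map X).prod (μ.map Y))) :
    ∫ ω, g (X ω, Y ω) ∂μ = ∫ x, ∫ y, g (x, y) ∂(μ.map Y) ∂(μ.map X) := by
  rw [← integral_prod _ hg, ← (indepFun_iff_map_prod_eq_prod_map_map hX hY).1 hXY] at *
  exact (integral_map (hX.prodMk hY) hg.aestronglyMeasurable).symm

lemma integrable_cexp_ofReal_mul_I {α : Type*} [MeasurableSpace α] {μ : Measure α}
    [IsFiniteMeasure μ] {f : α → ℝ} (hf : AEMeasurable f μ) :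
    Integrable (fun x ↦ cexp (f x * I)) μ :=
  (integrable_const (1 : ℝ)).mono' (by fun_prop)
    (ae_of_all _ fun x ↦ (norm_exp_ofReal_mul_I (f x)).le)

lemma ae_nonneg_gammaMeasure (a r : ℝ) : ∀ᵐ x ∂gammaMeasure a r, 0 ≤ x := by
  rw [ae_iff]
  simp only [not_le]
  change gammaMeasure a r (Iio 0) = 0
  rw [gammaMeasure, withDensity_apply _ measurableSet_Iio,
    setLIntegral_congr_fun measurableSet_Iio fun x hx ↦ gammaPDF_of_neg hx, lintegral_zero]

lemma integral_gammaMeasure {E : Type*} [NormedAddCommGroup E] [NormedSpace ℝ E] {a r : ℝ}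
    (ha : 0 < a) (hr : 0 < r) (f : ℝ → E) :
    ∫ x, f x ∂gammaMeasure a r =
      ∫ x in Ioi 0, (r ^ a / Real.Gamma a * x ^ (a - 1) * Real.exp (-(r * x))) • f x := by
  have hpdf : ∀ x, (gammaPDF a r x).toReal • f x = (Ici 0).indicator
      (fun x ↦ (r ^ a / Real.Gamma a * x ^ (a - 1) * Real.exp (-(r * x))) • f x) x := by
    intro x
    rw [gammaPDF, ENNReal.toReal_ofReal (gammaPDFReal_nonneg ha hr x), gammaPDFReal]
    by_cases hx : 0 ≤ x <;> simp [hx]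
  rw [gammaMeasure, integral_withDensity_eq_integral_toReal_smul
    (f := gammaPDF a r) (measurable_gammaPDFReal a r).ennreal_ofReal
    (ae_of_all _ fun _ ↦ ENNReal.ofReal_lt_top)]
  simp only [hpdf]
  rw [integral_indicator measurableSet_Ici, integral_Ici_eq_integral_Ioi]

lemma integral_exp_neg_mul_gammaMeasure {a r c : ℝ} (ha : 0 < a) (hr : 0 < r) (hc : -r < c) :
    ∫ x, Real.exp (-(c * x)) ∂gammaMeasure a r = (1 + c / r) ^ (-a) := by
  have hrc : 0 < r + c := by linarith
  have hmerge : ∀ x, r ^ a / Real.Gamma a * x ^ (a - 1) * Real.exp (-(r * x)) *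
      Real.exp (-(c * x)) = r ^ a / Real.Gamma a * (x ^ (a - 1) * Real.exp (-((r + c) * x))) :=
    fun x ↦ by rw [mul_assoc, mul_assoc, ← Real.exp_add]; ring_nf
  simp only [integral_gammaMeasure ha hr, smul_eq_mul, hmerge, integral_const_mul,
    Real.integral_rpow_mul_exp_neg_mul_Ioi ha hrc]
  rw [show 1 + c / r = (r / (r + c))⁻¹ by field_simp, Real.inv_rpow (by positivity),
    Real.rpow_neg (by positivity), inv_inv, Real.div_rpow hr.le hrc.le,
    Real.div_rpow zero_le_one hrc.le, Real.one_rpow]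
  field_simp

/-- **Characteristic function of the (standardized symmetric) variance gamma
distribution.** If `W ~ Gamma(λ, 1)` and `V` is an independent standard normal
random variable, then `Y = √W · V` has characteristic function
`E[exp(i s Y)] = (1 + s²/2)^{-λ}` for all `s ∈ ℝ`. -/
theorem charFun_variance_gamma
    {Ω : Type*} [MeasurableSpace Ω] (μ : Measure Ω) [IsProbabilityMeasure μ]
    (lam : ℝ) (hlam : 0 < lam)
    (W V : Ω → ℝ) (hWmeas : Measurable W) (hVmeas : Measurable V)
    (hW : Measure.map W μ = gammaMeasure lam 1)
    (hV : Measure.map V μ = gaussianReal 0 1)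
    (hindep : IndepFun W V μ)
    (Y : Ω → ℝ) (hY : ∀ ω, Y ω = Real.sqrt (W ω) * V ω) :
    ∀ s : ℝ,
      (∫ ω, Complex.exp (Complex.I * (s * Y ω)) ∂μ) =
        (((1 + s ^ 2 / 2 : ℝ) ^ (-lam) : ℝ) : ℂ) := by
  intro s
  calc ∫ ω, cexp (I * (s * Y ω)) ∂μ
      = ∫ w, ∫ v, cexp (((s * √w * v : ℝ) : ℂ) * I) ∂gaussianReal 0 1 ∂gammaMeasure lam 1 := by
        rw [← hW, ← hV, ← hindep.integral_comp_prodMk hWmeas.aemeasurable hVmeas.aemeasurable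
          (g := fun p ↦ cexp (((s * √p.1 * p.2 : ℝ) : ℂ) * I))
          (integrable_cexp_ofReal_mul_I (by fun_prop))]
        simp only [hY]
        push_cast
        ring_nf
    _ = ∫ w, ((Real.exp (-(s ^ 2 / 2 * w)) : ℝ) : ℂ) ∂gammaMeasure lam 1 := by
        refine integral_congr_ae ((ae_nonneg_gammaMeasure lam 1).mono fun w (hw : 0 ≤ w) ↦ ?_)
        have hcf := charFun_gaussianReal (μ := 0) (v := 1) (s * √w)
        simp only [charFun_apply_real, ← ofReal_mul] at hcf
        dsimp only
        rw [hcf, ofReal_exp, ← ofReal_pow, mul_pow, Real.sq_sqrt hw]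
        push_cast
        ring_nf
    _ = _ := by
        rw [integral_complex_ofReal,
          integral_exp_neg_mul_gammaMeasure hlam one_pos (by linarith [sq_nonneg s]), div_one]
end
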